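/- Comparison of inclusion and independent-particle Dirichlet forms: for every ε ∈ (0,1), every k ∈ ℕ, every weight ω : Ω_ε → (0,∞) and every f : Ω_ε^k → ℝ, one has E_{ω,⊗}^{ε,k}(f) ≤ E_ω^{ε,k}(f). -/

import Mathlib

open scoped Classical MeasureTheory
open Filter MeasureTheory Set

noncomputable section

/-- A bounded Lipschitz domain in `ℝ^d` containing locally, near every boundary point and
up to an isometry of `ℝ^d`, the open region strictly above the graph of a Lipschitz function. -/
def IsLipschitzDomain (d : ℕ) (Ω : Set (EuclideanSpace ℝ (Fin d))) : Prop :=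
  IsOpen Ω ∧ IsConnected Ω ∧ Bornology.IsBounded Ω ∧
    ∀ p ∈ frontier Ω, ∃ U ∈ nhds p,
      ∃ (φ : EuclideanSpace ℝ (Fin d) ≃ᵢ EuclideanSpace ℝ (Fin d)) (j : Fin d)
        (L : NNReal) (g : (Fin d → ℝ) → ℝ),
        LipschitzWith L g ∧
          ∀ x ∈ U, (x ∈ Ω ↔ g (fun i => if i = j then 0 else φ x i) < φ x j)

/-- The points of the rescaled lattice `εℤ^d`. -/
def latticePts (d : ℕ) (ε : ℝ) : Set (EuclideanSpace ℝ (Fin d)) :=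
  {x | ∀ i, ∃ n : ℤ, x i = n * ε}

/-- The union of all closed segments joining nearest-neighbour points of `εℤ^d`. -/
def gridSet (d : ℕ) (ε : ℝ) : Set (EuclideanSpace ℝ (Fin d)) :=
  ⋃ x ∈ latticePts d ε, ⋃ y ∈ latticePts d ε, ⋃ (_ : dist x y = ε), segment ℝ x y

/-- The discrete domain `Ω_ε`. -/
def discDomain {d : ℕ} (Ω : Set (EuclideanSpace ℝ (Fin d))) (ε : ℝ) :
    Set (EuclideanSpace ℝ (Fin d)) :=
  connectedComponentIn (Ω ∩ gridSet d ε) 0 ∩ latticePts d ε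

/-- The discrete inner boundary `∂Ω_ε`. -/
def innerBdry {d : ℕ} (Ω : Set (EuclideanSpace ℝ (Fin d))) (ε : ℝ) :
    Set (EuclideanSpace ℝ (Fin d)) :=
  {x ∈ discDomain Ω ε | ({y ∈ discDomain Ω ε | dist x y = ε}).ncard < 2 * d}

variable {d : ℕ}

/-- The set `Ω_ε^k` of `k`-tuples of points of `Ω_ε`. -/
def tupleSet (Ω : Set (EuclideanSpace ℝ (Fin d))) (ε : ℝ) (k : ℕ) :
    Set (Fin k → EuclideanSpace ℝ (Fin d)) :=
  {x | ∀ i, x i ∈ discDomain Ω ε}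

/-- The weight `ω[x] = ∏_i (ω(x_i) + #{j < i : x_j = x_i})`. -/
def wWeight (ω : EuclideanSpace ℝ (Fin d) → ℝ) (k : ℕ)
    (x : Fin k → EuclideanSpace ℝ (Fin d)) : ℝ :=
  ∏ i : Fin k, (ω (x i) + ((Finset.univ.filter fun j => j < i ∧ x j = x i).card : ℝ))

/-- The inclusion generator `A_ω^{ε,k}` with reference weight `ω`. -/
def inclGen (Ω : Set (EuclideanSpace ℝ (Fin d))) (ε : ℝ)
    (ω : EuclideanSpace ℝ (Fin d) → ℝ) (k : ℕ)
    (f : (Fin k → EuclideanSpace ℝ (Fin d)) → ℝ)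
    (x : Fin k → EuclideanSpace ℝ (Fin d)) : ℝ :=
  ε ^ (-2 : ℝ) * ∑ i : Fin k,
    ∑ᶠ y ∈ {y ∈ discDomain Ω ε | dist (x i) y = ε},
      (ω y + ((Finset.univ.filter fun j => j ≠ i ∧ x j = y).card : ℝ)) *
        (f (Function.update x i y) - f x)

/-- The independent-particle generator `A_{ω,⊗}^{ε,k}` with reference weight `ω`. -/
def indepGen (Ω : Set (EuclideanSpace ℝ (Fin d))) (ε : ℝ)
    (ω : EuclideanSpace ℝ (Fin d) → ℝ) (k : ℕ)
    (f : (Fin k → EuclideanSpace ℝ (Fin d)) → ℝ)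
    (x : Fin k → EuclideanSpace ℝ (Fin d)) : ℝ :=
  ε ^ (-2 : ℝ) * ∑ i : Fin k,
    ∑ᶠ y ∈ {y ∈ discDomain Ω ε | dist (x i) y = ε},
      ω y * (f (Function.update x i y) - f x)

/-- The inclusion Dirichlet form `E_ω^{ε,k}`. -/
def inclForm (Ω : Set (EuclideanSpace ℝ (Fin d))) (ε : ℝ)
    (ω : EuclideanSpace ℝ (Fin d) → ℝ) (k : ℕ)
    (f : (Fin k → EuclideanSpace ℝ (Fin d)) → ℝ) : ℝ :=
  ε ^ (k * d) * ∑ᶠ x ∈ tupleSet Ω ε k, wWeight ω k x * f x * (- inclGen Ω ε ω k f x)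

/-- The independent-particle Dirichlet form `E_{ω,⊗}^{ε,k}`. -/
def indepForm (Ω : Set (EuclideanSpace ℝ (Fin d))) (ε : ℝ)
    (ω : EuclideanSpace ℝ (Fin d) → ℝ) (k : ℕ)
    (f : (Fin k → EuclideanSpace ℝ (Fin d)) → ℝ) : ℝ :=
  ε ^ (k * d) * ∑ᶠ x ∈ tupleSet Ω ε k,
    (∏ i : Fin k, ω (x i)) * f x * (- indepGen Ω ε ω k f x)

/-!
Both forms are Dirichlet forms of reversible jump processes of `k` particles on the finite
set `Ω_ε` (finite because `Ω` is bounded). The product weight `∏ ω(x_i)` is reversible for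
independent walkers with rates `ω(y)`. For the inclusion rates `ω(y) + #{j ≠ i : x_j = y}`,
write `ω[x] = ∏_v ω(v)^(n_v)` as a product of rising factorials of the occupation numbers:
removing particle `i` leaves a factor independent of its position, times
`ω(x_i) + #{j ≠ i : x_j = x_i}`, which is detailed balance. Summation by parts over the
involution `(x, i, y) ↦ (x_i^y, i, x_i)` turns each form into
`ε^(kd-2)/2 · Σ π(x) c(x,i,y) (f(x_i^y) - f(x))²`, and termwise `∏ ω(x_i) ≤ ω[x]` and
`ω(y) ≤ ω(y) + #{j ≠ i : x_j = y}`.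
-/

open Finset Function Bornology

section RisingFactorial

variable {R : Type*} [CommSemiring R]

theorem prod_add_card_filter_lt {ι : Type*} [LinearOrder ι] (s : Finset ι) (a : R) :
    ∏ i ∈ s, (a + #{j ∈ s | j < i}) = (ascPochhammer R #s).eval a := by
  induction s using Finset.induction_on_max with
  | empty => simp
  | insert m s hlt ih =>
    have hm : m ∉ s := fun h => lt_irrefl m (hlt m h)
    have hbelow_m : {j ∈ insert m s | j < m} = s := by
      rw [filter_insert, if_neg (lt_irrefl m), filter_true_of_mem hlt]
    have hbelow : ∀ i ∈ s, {j ∈ insert m s | j < i} = {j ∈ s | j < i} := fun i hi => by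
      rw [filter_insert, if_neg (hlt i hi).not_gt]
    rw [prod_insert hm, hbelow_m, Finset.prod_congr rfl fun i hi => by rw [hbelow i hi], ih,
      card_insert_of_notMem hm, ascPochhammer_succ_eval, mul_comm]

variable {α : Type*} [DecidableEq α] {k : ℕ}

theorem prod_add_card_eq_prod_ascPochhammer (a : α → R) (x : Fin k → α) {T : Finset α}
    (hT : ∀ j, x j ∈ T) :
    ∏ i, (a (x i) + #{j | j < i ∧ x j = x i}) =
      ∏ v ∈ T, (ascPochhammer R #{j | x j = v}).eval (a v) := by
  rw [← prod_fiberwise_of_maps_to (g := x) fun j _ => hT j]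
  refine prod_congr rfl fun v _ => ?_
  rw [← prod_add_card_filter_lt]
  refine prod_congr rfl fun i hi => ?_
  obtain rfl : x i = v := (mem_filter.1 hi).2
  congr 3
  ext j
  simp [and_comm]

theorem card_filter_eq_card_filter_ne_add (x : Fin k → α) (i : Fin k) (v : α) :
    #{j | x j = v} = #{j | j ≠ i ∧ x j = v} + if x i = v then 1 else 0 := by
  have herase : ({j | j ≠ i ∧ x j = v} : Finset (Fin k)) =
      ({j | x j = v} : Finset (Fin k)).erase i := by
    ext j
    simp [and_comm]
  rw [herase]
  split_ifs with h
  · rw [card_erase_add_one (by simp [h])]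
  · rw [erase_eq_of_notMem (by simp [h]), add_zero]

/-- The first factor depends on `x` only through the particles other than `i`. -/
theorem prod_add_card_eq_mul_add_card_ne (a : α → R) (x : Fin k → α) (i : Fin k) {T : Finset α}
    (hT : ∀ j, x j ∈ T) :
    ∏ l, (a (x l) + #{j | j < l ∧ x j = x l}) =
      (∏ v ∈ T, (ascPochhammer R #{j | j ≠ i ∧ x j = v}).eval (a v)) *
        (a (x i) + #{j | j ≠ i ∧ x j = x i}) := by
  have hsplit : ∀ v, (ascPochhammer R #{j | x j = v}).eval (a v) =
      (ascPochhammer R #{j | j ≠ i ∧ x j = v}).eval (a v) *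
        if x i = v then a v + #{j | j ≠ i ∧ x j = v} else 1 := fun v => by
    rw [card_filter_eq_card_filter_ne_add x i v]
    split_ifs
    · rw [ascPochhammer_succ_eval]
    · rw [add_zero, mul_one]
  rw [prod_add_card_eq_prod_ascPochhammer a x hT, Finset.prod_congr rfl fun v _ => hsplit v,
    prod_mul_distrib, Finset.prod_ite_eq, if_pos (hT i)]

end RisingFactorial

section JumpProcess

variable {α : Type*} {k : ℕ}

/-- `c x i y` is the rate at which particle `i` of the configuration `x` jumps to `y`. -/
def IsReversible (π : (Fin k → α) → ℝ) (c : (Fin k → α) → Fin k → α → ℝ) : Prop :=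
  ∀ x i y, π (update x i y) * c (update x i y) i (x i) = π x * c x i y

def jumpEnergy (D : Finset α) (r : α → α → Prop) (π : (Fin k → α) → ℝ)
    (c : (Fin k → α) → Fin k → α → ℝ) (f : (Fin k → α) → ℝ) : ℝ :=
  ∑ x ∈ Fintype.piFinset fun _ => D, ∑ i, ∑ y ∈ D with r (x i) y,
    π x * c x i y * (f (update x i y) - f x) ^ 2

theorem sum_mul_sub_eq_neg_half_sum_sq {γ β : Type*} (A : Finset γ) (σ : γ → γ)
    (hσ : ∀ a ∈ A, σ a ∈ A) (hσσ : ∀ a ∈ A, σ (σ a) = a) (src tgt : γ → β)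
    (hsrc : ∀ a ∈ A, src (σ a) = tgt a) (w : γ → ℝ) (hw : ∀ a ∈ A, w (σ a) = w a)
    (f : β → ℝ) :
    ∑ a ∈ A, w a * f (src a) * (f (tgt a) - f (src a)) =
      -(1 / 2) * ∑ a ∈ A, w a * (f (tgt a) - f (src a)) ^ 2 := by
  have htgt : ∀ a ∈ A, tgt (σ a) = src a := fun a ha => by
    rw [← hsrc (σ a) (hσ a ha), hσσ a ha]
  have hswap : ∑ a ∈ A, w a * f (src a) * (f (tgt a) - f (src a)) =
      ∑ a ∈ A, w a * f (tgt a) * (f (src a) - f (tgt a)) :=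
    sum_nbij' σ σ hσ hσ hσσ hσσ fun a ha => by rw [hw a ha, hsrc a ha, htgt a ha]
  have hsum : ∑ a ∈ A, (w a * f (src a) * (f (tgt a) - f (src a)) +
      w a * f (tgt a) * (f (src a) - f (tgt a))) =
      -∑ a ∈ A, w a * (f (tgt a) - f (src a)) ^ 2 := by
    rw [← sum_neg_distrib]
    exact sum_congr rfl fun a _ => by ring
  rw [sum_add_distrib, ← hswap] at hsum
  linarith

variable {D : Finset α} {r : α → α → Prop}

theorem sum_mul_jump_eq_neg_half_jumpEnergy (hr : ∀ ⦃a b⦄, r a b → r b a)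
    {π : (Fin k → α) → ℝ} {c : (Fin k → α) → Fin k → α → ℝ} (hπc : IsReversible π c)
    (f : (Fin k → α) → ℝ) :
    ∑ x ∈ Fintype.piFinset fun _ => D, π x * f x *
        ∑ i, ∑ y ∈ D with r (x i) y, c x i y * (f (update x i y) - f x) =
      -(1 / 2) * jumpEnergy D r π c f := by
  set A := ((Fintype.piFinset fun _ => D) ×ˢ (univ : Finset (Fin k)) ×ˢ D).filter
    fun p => r (p.1 p.2.1) p.2.2
  have hA : ∀ G : (Fin k → α) × Fin k × α → ℝ, ∑ p ∈ A, G p =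
      ∑ x ∈ Fintype.piFinset fun _ => D, ∑ i, ∑ y ∈ D with r (x i) y, G (x, i, y) := fun G => by
    simp only [A, sum_filter, sum_product]
  have hmemA : ∀ x i y, (x, i, y) ∈ A ↔ (∀ j, x j ∈ D) ∧ y ∈ D ∧ r (x i) y := by
    simp [A, and_assoc]
  let σ : (Fin k → α) × Fin k × α → (Fin k → α) × Fin k × α :=
    fun p => (update p.1 p.2.1 p.2.2, p.2.1, p.1 p.2.1)
  have hσ : ∀ p ∈ A, σ p ∈ A := by
    rintro ⟨x, i, y⟩ hp
    obtain ⟨hx, hy, hxy⟩ := (hmemA x i y).1 hp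
    refine (hmemA _ _ _).2 ⟨fun j => ?_, hx i, by simpa [σ] using hr hxy⟩
    rcases eq_or_ne j i with rfl | hj
    · simpa [σ] using hy
    · simpa [σ, hj] using hx j
  have hσσ : ∀ p ∈ A, σ (σ p) = p := by
    rintro ⟨x, i, y⟩ _
    simp [σ]
  have hpairs := sum_mul_sub_eq_neg_half_sum_sq A σ hσ hσσ Prod.fst
    (fun p => update p.1 p.2.1 p.2.2) (fun _ _ => rfl) (fun p => π p.1 * c p.1 p.2.1 p.2.2)
    (fun p _ => hπc p.1 p.2.1 p.2.2) f
  rw [hA, hA] at hpairs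
  rw [jumpEnergy, ← hpairs]
  refine sum_congr rfl fun x _ => ?_
  rw [mul_sum]
  refine sum_congr rfl fun i _ => ?_
  rw [mul_sum]
  exact sum_congr rfl fun y _ => by ring

theorem finsum_mul_neg_jump_eq_jumpEnergy (D : Finset α) (hr : ∀ ⦃a b⦄, r a b → r b a)
    {π : (Fin k → α) → ℝ} {c : (Fin k → α) → Fin k → α → ℝ} (hπc : IsReversible π c)
    (s : ℝ) (f : (Fin k → α) → ℝ) :
    ∑ᶠ x ∈ {x : Fin k → α | ∀ i, x i ∈ (D : Set α)}, π x * f x *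
        -(s * ∑ i, ∑ᶠ y ∈ {y ∈ (D : Set α) | r (x i) y}, c x i y * (f (update x i y) - f x)) =
      s / 2 * jumpEnergy D r π c f := by
  have hpi : {x : Fin k → α | ∀ i, x i ∈ (D : Set α)} =
      ↑(Fintype.piFinset fun _ => D : Finset (Fin k → α)) := by
    ext x
    simp
  have hnbr : ∀ z, {y ∈ (D : Set α) | r z y} = ↑(D.filter (r z)) := fun z =>
    (coe_filter _ _).symm
  simp_rw [hpi, hnbr, finsum_mem_coe_finset]
  rw [show s / 2 * jumpEnergy D r π c f = -s * (-(1 / 2) * jumpEnergy D r π c f) by ring,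
    ← sum_mul_jump_eq_neg_half_jumpEnergy hr hπc, mul_sum]
  exact sum_congr rfl fun x _ => by ring

theorem isReversible_prod (ω : α → ℝ) :
    IsReversible (fun x : Fin k → α => ∏ j, ω (x j)) fun _ _ y => ω y := by
  intro x i y
  simp only [apply_update (fun _ => ω), Finset.prod_update_of_mem (Finset.mem_univ i),
    Finset.prod_eq_mul_prod_sdiff_singleton_of_mem (Finset.mem_univ i) fun j => ω (x j)]
  ring

theorem jumpEnergy_le_jumpEnergy {π π' : (Fin k → α) → ℝ} {c c' : (Fin k → α) → Fin k → α → ℝ}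
    (h : ∀ x ∈ Fintype.piFinset (fun _ => D), ∀ i, ∀ y ∈ D, π x * c x i y ≤ π' x * c' x i y)
    (f : (Fin k → α) → ℝ) : jumpEnergy D r π c f ≤ jumpEnergy D r π' c' f :=
  sum_le_sum fun x hx => sum_le_sum fun i _ => sum_le_sum fun y hy =>
    mul_le_mul_of_nonneg_right (h x hx i y (mem_filter.1 hy).1) (sq_nonneg _)

end JumpProcess

section InclusionWeights

variable {α : Type*} [DecidableEq α] {k : ℕ}

def inclRate (ω : α → ℝ) (x : Fin k → α) (i : Fin k) (y : α) : ℝ :=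
  ω y + #{j | j ≠ i ∧ x j = y}

theorem isReversible_wWeight {d : ℕ} (ω : EuclideanSpace ℝ (Fin d) → ℝ) :
    IsReversible (wWeight ω k) (inclRate ω) := by
  intro x i y
  set T := insert y (Finset.univ.image x)
  have hxT : ∀ j, x j ∈ T := fun j => mem_insert_of_mem (mem_image_of_mem x (Finset.mem_univ j))
  have hx'T : ∀ j, update x i y j ∈ T := fun j => by
    rcases eq_or_ne j i with rfl | hj
    · simp [T]
    · simpa [hj] using hxT j
  have hothers : ∀ v, ({j | j ≠ i ∧ update x i y j = v} : Finset (Fin k)) =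
      ({j | j ≠ i ∧ x j = v} : Finset (Fin k)) := fun v =>
    filter_congr fun j _ => and_congr_right fun hj => by rw [update_of_ne hj]
  unfold wWeight inclRate
  rw [prod_add_card_eq_mul_add_card_ne ω x i hxT, prod_add_card_eq_mul_add_card_ne ω _ i hx'T]
  simp only [hothers, update_self]
  ring

end InclusionWeights

section Lattice

variable {d : ℕ} {ε : ℝ}

theorem finite_inter_latticePts (hε : 0 < ε) {K : Set (EuclideanSpace ℝ (Fin d))}
    (hK : IsBounded K) : (K ∩ latticePts d ε).Finite := by
  let φ : (Fin d → ℤ) → EuclideanSpace ℝ (Fin d) := fun n => WithLp.toLp 2 fun i => n i * ε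
  have hφ : AntilipschitzWith (ε⁻¹).toNNReal φ := by
    refine AntilipschitzWith.of_le_mul_dist fun n m => ?_
    rw [Real.coe_toNNReal _ (inv_nonneg.2 hε.le),
      dist_pi_le_iff (mul_nonneg (inv_nonneg.2 hε.le) dist_nonneg)]
    intro i
    calc dist (n i) (m i) = ε⁻¹ * dist (φ n i) (φ m i) := by
          simp only [φ, Int.dist_eq, Real.dist_eq, ← sub_mul, abs_mul, abs_of_pos hε]
          field_simp
      _ ≤ ε⁻¹ * dist (φ n) (φ m) :=
          mul_le_mul_of_nonneg_left (PiLp.dist_apply_le _ _ i) (inv_nonneg.2 hε.le)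
  have hpre : (φ ⁻¹' K).Finite :=
    ((hφ.isBounded_preimage hK).isCompact_closure.finite_of_discrete).subset subset_closure
  refine (hpre.image φ).subset ?_
  rintro x ⟨hxK, hx⟩
  choose n hn using hx
  have hφn : φ n = x := by
    ext i
    simp [φ, hn]
  exact ⟨n, by rwa [Set.mem_preimage, hφn], hφn⟩

theorem discDomain_finite {Ω : Set (EuclideanSpace ℝ (Fin d))} (hΩ : IsBounded Ω)
    (hε : 0 < ε) : (discDomain Ω ε).Finite :=
  (finite_inter_latticePts hε hΩ).subset fun _ hx =>
    ⟨(connectedComponentIn_subset _ _ hx.1).1, hx.2⟩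

end Lattice

section DirichletForms

variable {d k : ℕ} {Ω : Set (EuclideanSpace ℝ (Fin d))} {ε : ℝ}
  {D : Finset (EuclideanSpace ℝ (Fin d))}

theorem indepForm_eq_jumpEnergy (hD : discDomain Ω ε = D) (ω : EuclideanSpace ℝ (Fin d) → ℝ)
    (f : (Fin k → EuclideanSpace ℝ (Fin d)) → ℝ) :
    indepForm Ω ε ω k f = ε ^ (k * d) * (ε ^ (-2 : ℝ) / 2 *
      jumpEnergy D (fun a b => dist a b = ε) (fun x => ∏ j, ω (x j)) (fun _ _ y => ω y) f) := by
  unfold indepForm indepGen tupleSet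
  rw [hD]
  exact congrArg _ (finsum_mul_neg_jump_eq_jumpEnergy D
    (fun a b h => (dist_comm b a).trans h) (isReversible_prod ω) _ f)

theorem inclForm_eq_jumpEnergy (hD : discDomain Ω ε = D) (ω : EuclideanSpace ℝ (Fin d) → ℝ)
    (f : (Fin k → EuclideanSpace ℝ (Fin d)) → ℝ) :
    inclForm Ω ε ω k f = ε ^ (k * d) * (ε ^ (-2 : ℝ) / 2 *
      jumpEnergy D (fun a b => dist a b = ε) (wWeight ω k) (inclRate ω) f) := by
  unfold inclForm inclGen tupleSet
  rw [hD]
  exact congrArg _ (finsum_mul_neg_jump_eq_jumpEnergy D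
    (fun a b h => (dist_comm b a).trans h) (isReversible_wWeight ω) _ f)

end DirichletForms

theorem inclusion_dirichlet_form_comparison_general
    (d : ℕ) (Ω : Set (EuclideanSpace ℝ (Fin d)))
    (hΩ : IsLipschitzDomain d Ω) :
    ∀ ε ∈ Set.Ioo (0:ℝ) 1, ∀ k : ℕ, 1 ≤ k →
      ∀ ω : EuclideanSpace ℝ (Fin d) → ℝ, (∀ x ∈ discDomain Ω ε, 0 < ω x) →
        ∀ f : (Fin k → EuclideanSpace ℝ (Fin d)) → ℝ,
          indepForm Ω ε ω k f ≤ inclForm Ω ε ω k f := by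
  intro ε ⟨hε, _⟩ k _ ω hω f
  obtain ⟨D, hD⟩ := (discDomain_finite hΩ.2.2.1 hε).exists_finset_coe
  rw [indepForm_eq_jumpEnergy hD.symm, inclForm_eq_jumpEnergy hD.symm]
  gcongr
  refine jumpEnergy_le_jumpEnergy (fun x hx i y hy => ?_) f
  have hωD : ∀ v ∈ D, 0 ≤ ω v := fun v hv => (hω v (hD ▸ hv)).le
  have hωx : ∀ j, 0 ≤ ω (x j) := fun j => hωD _ (Fintype.mem_piFinset.1 hx j)
  have hprod : ∏ j, ω (x j) ≤ wWeight ω k x :=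
    prod_le_prod (fun j _ => hωx j) fun j _ => le_add_of_nonneg_right (Nat.cast_nonneg _)
  exact mul_le_mul hprod (le_add_of_nonneg_right (Nat.cast_nonneg _)) (hωD y hy)
    ((prod_nonneg fun j _ => hωx j).trans hprod)

/-- Comparison of the inclusion and independent-particle
Dirichlet forms: `E_{ω,⊗}^{ε,k}(f) ≤ E_ω^{ε,k}(f)`. -/
theorem inclusion_dirichlet_form_comparison
    (d : ℕ) (hd : 2 ≤ d) (Ω : Set (EuclideanSpace ℝ (Fin d)))
    (hΩ : IsLipschitzDomain d Ω) (h0 : (0 : EuclideanSpace ℝ (Fin d)) ∈ Ω) :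
    ∀ ε ∈ Set.Ioo (0:ℝ) 1, ∀ k : ℕ, 1 ≤ k →
      ∀ ω : EuclideanSpace ℝ (Fin d) → ℝ, (∀ x ∈ discDomain Ω ε, 0 < ω x) →
        ∀ f : (Fin k → EuclideanSpace ℝ (Fin d)) → ℝ,
          indepForm Ω ε ω k f ≤ inclForm Ω ε ω k f :=
  inclusion_dirichlet_form_comparison_general d Ω hΩ
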